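/- arXiv:2303.01895 — 2 statements merged into one kernel-verified Lean document; each statement's English description precedes it below -/
import Mathlib

section
/- Let f : ℝ^d → ℝ^d be continuous, ε > 0, and F(A) = ⋃_{x∈A} B̄_ε(f(x)). If M is a nonempty compact minimal invariant set for F (i.e., F(M) = M and no nonempty compact proper subset of M is invariant), then for every x ∈ M, the ω-limit set ω({x}) equals M. In particular every point of M is recurrent: x ∈ ω({x}). -/
/-- The set-valued map `A ↦ ⋃_{x ∈ A} B̄_ε(f x)`. -/
def svF {d : ℕ} (f : EuclideanSpace ℝ (Fin d) → EuclideanSpace ℝ (Fin d)) (ε : ℝ)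
    (A : Set (EuclideanSpace ℝ (Fin d))) : Set (EuclideanSpace ℝ (Fin d)) :=
  ⋃ x ∈ A, Metric.closedBall (f x) ε

/-- The ω-limit set `ω(A) = ⋂_{k ≥ 1} closure (⋃_{s ≥ k} F^s(A))`. -/
def omegaLim {d : ℕ} (f : EuclideanSpace ℝ (Fin d) → EuclideanSpace ℝ (Fin d)) (ε : ℝ)
    (A : Set (EuclideanSpace ℝ (Fin d))) : Set (EuclideanSpace ℝ (Fin d)) :=
  ⋂ k, ⋂ (_ : 1 ≤ k), closure (⋃ s, ⋃ (_ : k ≤ s), (svF f ε)^[s] A)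

/-!
Write `F = svF f ε` and `K k = closure (⋃ s ≥ k, F^[s] {x})`. These are nested nonempty compact
subsets of `M`, so `ω({x}) = ⋂ k, K k` is nonempty and compact. It is `F`-invariant:
`F (K k) ⊆ K (k + 1)` because continuity of `f` gives `F (closure B) ⊆ closure (F B)`, while
`K (k + 1) ⊆ F (K k)` because `F` maps compact sets to compact (hence closed) sets; and `F`
commutes with decreasing intersections of compact sets by Cantor's intersection theorem.
Minimality of `M` then forces `ω({x}) = M`, which contains `x`.
-/

open Set Function

def orbitTail {α : Type*} (G : Set α → Set α) (A : Set α) (k : ℕ) : Set α :=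
  ⋃ s, ⋃ (_ : k ≤ s), G^[s] A

section orbitTail

variable {α : Type*} {G : Set α → Set α} {A M : Set α}

theorem orbitTail_antitone : Antitone (orbitTail G A) :=
  fun _ _ hkl => iUnion_mono fun _ => iUnion_subset fun hls =>
    subset_iUnion_of_subset (hkl.trans hls) subset_rfl

theorem orbitTail_subset (hG : Monotone G) (hM : G M = M) (hA : A ⊆ M) (k : ℕ) :
    orbitTail G A k ⊆ M :=
  iUnion₂_subset fun s _ => iterate_fixed hM s ▸ hG.iterate s hA

theorem orbitTail_nonempty (hG : ∀ B, B.Nonempty → (G B).Nonempty) (hA : A.Nonempty) (k : ℕ) :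
    (orbitTail G A k).Nonempty :=
  (Iterate.rec Set.Nonempty hA hG k).mono (subset_iUnion₂_of_subset k le_rfl subset_rfl)

end orbitTail

section svF

variable {d : ℕ} {f : EuclideanSpace ℝ (Fin d) → EuclideanSpace ℝ (Fin d)} {ε : ℝ}
  {A K : Set (EuclideanSpace ℝ (Fin d))}

theorem mem_svF {y : EuclideanSpace ℝ (Fin d)} :
    y ∈ svF f ε A ↔ ∃ z ∈ A, dist y (f z) ≤ ε := by
  simp only [svF, mem_iUnion₂, Metric.mem_closedBall, exists_prop]

theorem svF_mono : Monotone (svF f ε) :=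
  fun _ _ h => biUnion_subset_biUnion_left h

theorem svF_iUnion {ι : Sort*} (B : ι → Set (EuclideanSpace ℝ (Fin d))) :
    svF f ε (⋃ i, B i) = ⋃ i, svF f ε (B i) :=
  biUnion_iUnion B _

theorem svF_orbitTail (k : ℕ) :
    svF f ε (orbitTail (svF f ε) A k) = orbitTail (svF f ε) A (k + 1) := by
  ext y
  simp only [orbitTail, svF_iUnion, mem_iUnion, exists_prop]
  constructor
  · rintro ⟨s, hks, hy⟩
    exact ⟨s + 1, by omega, by rwa [iterate_succ_apply']⟩
  · rintro ⟨s, hks, hy⟩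
    obtain ⟨t, rfl⟩ := Nat.exists_eq_add_of_le' (Nat.one_le_of_lt hks)
    exact ⟨t, by omega, by rwa [iterate_succ_apply'] at hy⟩

theorem svF_nonempty (hε : 0 ≤ ε) (hA : A.Nonempty) : (svF f ε A).Nonempty :=
  let ⟨z, hz⟩ := hA
  ⟨f z, mem_svF.2 ⟨z, hz, by rwa [dist_self]⟩⟩

theorem svF_closure_subset (hf : Continuous f) : svF f ε (closure A) ⊆ closure (svF f ε A) := by
  intro y hy
  obtain ⟨z, hz, hyz⟩ := mem_svF.1 hy
  refine Metric.mem_closure_iff.2 fun δ hδ => ?_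
  obtain ⟨u, hfu, hu⟩ : ∃ u, dist (f u) (f z) < δ ∧ u ∈ A :=
    mem_closure_iff_nhds.1 hz _ (hf.continuousAt.preimage_mem_nhds (Metric.ball_mem_nhds _ hδ))
  -- translating `y` by `f u - f z` keeps it within `ε` of `f u` and within `δ` of `y`
  refine ⟨y + (f u - f z), mem_svF.2 ⟨u, hu, ?_⟩, ?_⟩
  · rwa [add_sub_left_comm, dist_self_add_left, ← dist_eq_norm]
  · rwa [dist_self_add_right, ← dist_eq_norm]

theorem IsCompact.svF (hf : Continuous f) (hε : 0 ≤ ε) (hK : IsCompact K) :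
    IsCompact (svF f ε K) := by
  have hfK := hK.image hf
  rw [_root_.svF, ← biUnion_image (g := fun y => Metric.closedBall y ε),
    ← hfK.cthickening_eq_biUnion_closedBall hε]
  exact hfK.cthickening

theorem iInter_svF_subset_svF_iInter (hf : Continuous f)
    {K : ℕ → Set (EuclideanSpace ℝ (Fin d))} (hK : Antitone K)
    (hKc : ∀ n, IsCompact (K n)) :
    ⋂ n, svF f ε (K n) ⊆ svF f ε (⋂ n, K n) := by
  intro y hy
  have hP : IsClosed {z | dist y (f z) ≤ ε} :=
    isClosed_le (continuous_const.dist hf) continuous_const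
  obtain ⟨z, hz⟩ := IsCompact.nonempty_iInter_of_sequence_nonempty_isCompact_isClosed
    (fun n => K n ∩ {z | dist y (f z) ≤ ε})
    (fun n => inter_subset_inter_left _ (hK n.le_succ))
    (fun n => mem_svF.1 (mem_iInter.1 hy n)) ((hKc 0).inter_right hP)
    (fun n => (hKc n).isClosed.inter hP)
  rw [mem_iInter] at hz
  exact mem_svF.2 ⟨z, mem_iInter.2 fun n => (hz n).1, (hz 0).2⟩

end svF

section omegaLim

variable {d : ℕ} {f : EuclideanSpace ℝ (Fin d) → EuclideanSpace ℝ (Fin d)} {ε : ℝ}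
  {A M : Set (EuclideanSpace ℝ (Fin d))}

theorem omegaLim_eq_iInter_closure_orbitTail :
    omegaLim f ε A = ⋂ k, closure (orbitTail (svF f ε) A k) :=
  Subset.antisymm
    (subset_iInter fun k => (iInter₂_subset (k + 1) (Nat.le_add_left 1 k)).trans
      (closure_mono (orbitTail_antitone k.le_succ)))
    (subset_iInter₂ fun k _ => iInter_subset _ k)

theorem isClosed_omegaLim : IsClosed (omegaLim f ε A) :=
  isClosed_iInter fun _ => isClosed_iInter fun _ => isClosed_closure

theorem omegaLim_subset (hM : IsClosed M) (hFM : svF f ε M = M) (hA : A ⊆ M) :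
    omegaLim f ε A ⊆ M := by
  rw [omegaLim_eq_iInter_closure_orbitTail]
  exact (iInter_subset _ 0).trans (closure_minimal (orbitTail_subset svF_mono hFM hA 0) hM)

theorem isCompact_omegaLim (hM : IsCompact M) (hFM : svF f ε M = M) (hA : A ⊆ M) :
    IsCompact (omegaLim f ε A) :=
  hM.of_isClosed_subset isClosed_omegaLim (omegaLim_subset hM.isClosed hFM hA)

theorem isCompact_closure_orbitTail (hM : IsCompact M) (hFM : svF f ε M = M) (hA : A ⊆ M)
    (k : ℕ) : IsCompact (closure (orbitTail (svF f ε) A k)) :=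
  hM.closure_of_subset (orbitTail_subset svF_mono hFM hA k)

theorem omegaLim_nonempty (hε : 0 ≤ ε) (hM : IsCompact M) (hFM : svF f ε M = M) (hA : A ⊆ M)
    (hAne : A.Nonempty) : (omegaLim f ε A).Nonempty := by
  rw [omegaLim_eq_iInter_closure_orbitTail]
  exact IsCompact.nonempty_iInter_of_sequence_nonempty_isCompact_isClosed _
    (fun k => closure_mono (orbitTail_antitone k.le_succ))
    (fun k => (orbitTail_nonempty (fun _ => svF_nonempty hε) hAne k).closure)
    (isCompact_closure_orbitTail hM hFM hA 0) (fun _ => isClosed_closure)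

theorem svF_omegaLim (hf : Continuous f) (hε : 0 ≤ ε) (hM : IsCompact M)
    (hFM : svF f ε M = M) (hA : A ⊆ M) : svF f ε (omegaLim f ε A) = omegaLim f ε A := by
  set K := fun k => closure (orbitTail (svF f ε) A k)
  have hKc : ∀ k, IsCompact (K k) := isCompact_closure_orbitTail hM hFM hA
  have hKanti : Antitone K := fun _ _ h => closure_mono (orbitTail_antitone h)
  have svF_K_subset : ∀ k, svF f ε (K k) ⊆ K (k + 1) := fun k =>
    (svF_closure_subset hf).trans (svF_orbitTail k ▸ subset_rfl)
  have K_succ_subset : ∀ k, K (k + 1) ⊆ svF f ε (K k) := fun k =>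
    closure_minimal (svF_orbitTail k ▸ svF_mono subset_closure) ((hKc k).svF hf hε).isClosed
  rw [omegaLim_eq_iInter_closure_orbitTail]
  refine Subset.antisymm (subset_iInter fun k => ?_) ?_
  · exact (svF_mono (iInter_subset K k)).trans ((svF_K_subset k).trans (hKanti k.le_succ))
  · exact (subset_iInter fun k => (iInter_subset K (k + 1)).trans (K_succ_subset k)).trans
      (iInter_svF_subset_svF_iInter hf hKanti hKc)

end omegaLim

theorem minimal_invariant_omegaLim_eq_general
    (d : ℕ) (f : EuclideanSpace ℝ (Fin d) → EuclideanSpace ℝ (Fin d))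
    (hf : Continuous f) (ε : ℝ) (hε : 0 < ε)
    (M : Set (EuclideanSpace ℝ (Fin d))) (hMc : IsCompact M)
    (hMinv : svF f ε M = M)
    (hMmin : ∀ M' : Set (EuclideanSpace ℝ (Fin d)),
      M' ⊆ M → M'.Nonempty → IsCompact M' → svF f ε M' = M' → M' = M) :
    ∀ x ∈ M, omegaLim f ε {x} = M ∧ x ∈ omegaLim f ε {x} := by
  intro x hx
  have hxM : {x} ⊆ M := singleton_subset_iff.2 hx
  have hω : omegaLim f ε {x} = M :=
    hMmin _ (omegaLim_subset hMc.isClosed hMinv hxM)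
      (omegaLim_nonempty hε.le hMc hMinv hxM (singleton_nonempty x))
      (isCompact_omegaLim hMc hMinv hxM) (svF_omegaLim hf hε.le hMc hMinv hxM)
  exact ⟨hω, hω ▸ hx⟩

theorem minimal_invariant_omegaLim_eq
    (d : ℕ) (f : EuclideanSpace ℝ (Fin d) → EuclideanSpace ℝ (Fin d))
    (hf : Continuous f) (ε : ℝ) (hε : 0 < ε)
    (M : Set (EuclideanSpace ℝ (Fin d))) (hMne : M.Nonempty) (hMc : IsCompact M)
    (hMinv : svF f ε M = M)
    (hMmin : ∀ M' : Set (EuclideanSpace ℝ (Fin d)),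
      M' ⊆ M → M'.Nonempty → IsCompact M' → svF f ε M' = M' → M' = M) :
    ∀ x ∈ M, omegaLim f ε {x} = M ∧ x ∈ omegaLim f ε {x} :=
  minimal_invariant_omegaLim_eq_general d f hf ε hε M hMc hMinv hMmin
end

section
/- Let E : X → X be a linear-algebraic model of a contactomorphism at a fixed point: suppose V is a finite-dimensional real vector space with a hyperplane Δ ⊂ V, and T : V → V is an invertible linear map with T(Δ) = Δ. Suppose V = L ⊕ N^u ⊕ N^s is a T-invariant splitting with L ⊆ Δ, where there exist constants 0 < λ < 1 and c > 0 with ‖T^k v‖ ≤ cλ^k‖v‖ for v ∈ N^s and ‖T^{-k} v‖ ≤ cλ^k‖v‖ for v ∈ N^u, for all k ≥ 1. If there exists a vector e_s ∈ N^s with e_s ∉ Δ, then N^u ⊆ Δ. -/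
/-!
Write `Δ = ker φ`. For any `x, y` the vector `φ y • x - φ x • y` lies in `Δ`, so invariance of `Δ`
under `Tᵏ` gives `φ y · φ (Tᵏ x) = φ x · φ (Tᵏ y)`. Taking `x = T⁻ᵏ u` with `u ∈ Nᵘ` and `y = eₛ`,
`φ eₛ · φ u = φ (T⁻ᵏ u) · φ (Tᵏ eₛ)` for every `k`; both factors tend to `0`, and `φ eₛ ≠ 0`.
-/

open Filter Topology Set LinearMap

theorem LinearMap.mul_apply_comm_of_mapsTo_ker {R M : Type*} [CommRing R] [AddCommGroup M]
    [Module R M] {φ : M →ₗ[R] R} {f : M →ₗ[R] M} (hf : MapsTo f (ker φ) (ker φ)) (x y : M) :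
    φ y * φ (f x) = φ x * φ (f y) := by
  have hmem : φ y • x - φ x • y ∈ ker φ := by simp [mul_comm]
  simpa [sub_eq_zero] using hf hmem

theorem tendsto_iterate_nhds_zero_of_norm_le {V : Type*} [SeminormedAddCommGroup V] {f : V → V}
    {c lam : ℝ} (hlam0 : 0 ≤ lam) (hlam1 : lam < 1) {v : V}
    (hf : ∀ k : ℕ, 1 ≤ k → ‖f^[k] v‖ ≤ c * lam ^ k * ‖v‖) :
    Tendsto (fun k ↦ f^[k] v) atTop (𝓝 0) := by
  refine squeeze_zero_norm' (eventually_atTop.mpr ⟨1, hf⟩) ?_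
  simpa using ((tendsto_pow_atTop_nhds_zero_of_lt_one hlam0 hlam1).const_mul c).mul_const ‖v‖

theorem LinearEquiv.mul_apply_iterate_comm_of_map_ker_eq {R V : Type*} [CommRing R]
    [AddCommGroup V] [Module R V] {φ : V →ₗ[R] R} {T : V ≃ₗ[R] V}
    (hT : Submodule.map (T : V →ₗ[R] V) (ker φ) = ker φ) (k : ℕ) (u y : V) :
    φ y * φ u = φ ((⇑T.symm)^[k] u) * φ ((⇑T)^[k] y) := by
  have hTker : MapsTo T (ker φ) (ker φ) := fun x hx ↦ hT ▸ Submodule.mem_map_of_mem hx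
  have hmaps : MapsTo ((T : V →ₗ[R] V) ^ k) (ker φ) (ker φ) := by
    rw [Module.End.coe_pow, LinearEquiv.coe_coe]
    exact hTker.iterate k
  have h := LinearMap.mul_apply_comm_of_mapsTo_ker hmaps ((⇑T.symm)^[k] u) y
  rwa [Module.End.pow_apply, Module.End.pow_apply, LinearEquiv.coe_coe,
    (Function.LeftInverse.iterate T.apply_symm_apply k) u] at h

theorem unstable_bundle_in_contact_hyperplane_general
    (V : Type*) [NormedAddCommGroup V] [NormedSpace ℝ V] [FiniteDimensional ℝ V]
    (Δ : Submodule ℝ V)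
    (hΔ : ∃ φ : V →ₗ[ℝ] ℝ, φ ≠ 0 ∧ Δ = LinearMap.ker φ)
    (T : V ≃ₗ[ℝ] V)
    (hTΔ : Submodule.map (T : V →ₗ[ℝ] V) Δ = Δ)
    (Nu Ns : Submodule ℝ V)
    (c lam : ℝ) (hlam0 : 0 < lam) (hlam1 : lam < 1)
    (hstable : ∀ k : ℕ, 1 ≤ k → ∀ v ∈ Ns, ‖(⇑T)^[k] v‖ ≤ c * lam ^ k * ‖v‖)
    (hunstable : ∀ k : ℕ, 1 ≤ k → ∀ v ∈ Nu, ‖(⇑T.symm)^[k] v‖ ≤ c * lam ^ k * ‖v‖)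
    (es : V) (hes : es ∈ Ns) (hesΔ : es ∉ Δ) :
    Nu ≤ Δ := by
  obtain ⟨φ, -, rfl⟩ := hΔ
  intro u hu
  have hφ : Continuous φ := LinearMap.continuous_of_finiteDimensional φ
  have hu0 := tendsto_iterate_nhds_zero_of_norm_le hlam0.le hlam1 (hunstable · · u hu)
  have hes0 := tendsto_iterate_nhds_zero_of_norm_le hlam0.le hlam1 (hstable · · es hes)
  have hlim : Tendsto (fun k ↦ φ ((⇑T.symm)^[k] u) * φ ((⇑T)^[k] es)) atTop (𝓝 0) := by
    simpa using ((hφ.tendsto 0).comp hu0).mul ((hφ.tendsto 0).comp hes0)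
  have hprod : φ es * φ u = 0 := by
    refine tendsto_nhds_unique ?_ hlim
    simp_rw [← T.mul_apply_iterate_comm_of_map_ker_eq hTΔ _ u es]
    exact tendsto_const_nhds
  exact (mul_eq_zero.mp hprod).resolve_left hesΔ

/-- Linear-algebraic core of "no normal saddles for contactomorphisms at Legendrians":
if `T` preserves a hyperplane `Δ`, admits an invariant splitting `V = L ⊕ Nᵘ ⊕ Nˢ` with
`L ⊆ Δ`, contraction on `Nˢ` and backward contraction on `Nᵘ`, and some stable vector is
transverse to `Δ`, then `Nᵘ ⊆ Δ`. -/
theorem unstable_bundle_in_contact_hyperplane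
    (V : Type*) [NormedAddCommGroup V] [NormedSpace ℝ V] [FiniteDimensional ℝ V]
    (Δ : Submodule ℝ V)
    (hΔ : ∃ φ : V →ₗ[ℝ] ℝ, φ ≠ 0 ∧ Δ = LinearMap.ker φ)
    (T : V ≃ₗ[ℝ] V)
    (hTΔ : Submodule.map (T : V →ₗ[ℝ] V) Δ = Δ)
    (L Nu Ns : Submodule ℝ V)
    (hLΔ : L ≤ Δ)
    (hTL : Submodule.map (T : V →ₗ[ℝ] V) L = L)
    (hTNu : Submodule.map (T : V →ₗ[ℝ] V) Nu = Nu)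
    (hTNs : Submodule.map (T : V →ₗ[ℝ] V) Ns = Ns)
    (hsplit : ∀ v : V, ∃! t : V × V × V,
      t.1 ∈ L ∧ t.2.1 ∈ Nu ∧ t.2.2 ∈ Ns ∧ v = t.1 + t.2.1 + t.2.2)
    (c lam : ℝ) (hc : 0 < c) (hlam0 : 0 < lam) (hlam1 : lam < 1)
    (hstable : ∀ k : ℕ, 1 ≤ k → ∀ v ∈ Ns, ‖(⇑T)^[k] v‖ ≤ c * lam ^ k * ‖v‖)
    (hunstable : ∀ k : ℕ, 1 ≤ k → ∀ v ∈ Nu, ‖(⇑T.symm)^[k] v‖ ≤ c * lam ^ k * ‖v‖)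
    (es : V) (hes : es ∈ Ns) (hesΔ : es ∉ Δ) :
    Nu ≤ Δ :=
  unstable_bundle_in_contact_hyperplane_general V Δ hΔ T hTΔ Nu Ns c lam hlam0 hlam1 hstable
    hunstable es hes hesΔ
end
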